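/- In G(2e,e,2) with e ≥ 3, let r = (0,0 | (1 2)), s = (-1,1 | (1 2)), t = (e,0 | id), v = (rs)^{e-1} r t, w_{2i} = (rs)^i and w_{2i+1} = (rs)^i r for 0 ≤ i < e. If 0 ≤ m < 4, 0 ≤ i,j < 2e, and v^m w_i = w_j, then m = 0 and i = j. Hence the 8e elements v^m w_i are pairwise distinct and exhaust G(2e,e,2), so the edge sequence [[r,s]^{e-1}, r, t] repeated 4 times yields a Hamiltonian cycle in the Cayley graph Γ(G(2e,e,2), {r,s,t}). -/

import Mathlib

/-- The wreath product `ZMod m ≀ Sₙ`: elements `(a | σ)` with `a : Fin n → ZMod m`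
and `σ` a permutation of `{1,…,n}` (i.e. of `Fin n`). -/
structure W (m n : ℕ) : Type where
  a : Fin n → ZMod m
  p : Equiv.Perm (Fin n)

namespace W

lemma ext' {m n : ℕ} {x y : W m n} (h1 : x.a = y.a) (h2 : x.p = y.p) : x = y := by
  cases x; cases y; cases h1; cases h2; rfl

instance (m n : ℕ) : Mul (W m n) :=
  ⟨fun x y => ⟨fun i => x.a i + y.a (x.p i), y.p * x.p⟩⟩

instance (m n : ℕ) : One (W m n) := ⟨⟨0, 1⟩⟩

instance (m n : ℕ) : Inv (W m n) :=
  ⟨fun x => ⟨fun i => -(x.a (x.p.symm i)), x.p⁻¹⟩⟩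

lemma mul_def {m n : ℕ} (x y : W m n) :
    x * y = ⟨fun i => x.a i + y.a (x.p i), y.p * x.p⟩ := rfl

lemma one_def {m n : ℕ} : (1 : W m n) = ⟨0, 1⟩ := rfl

lemma inv_def {m n : ℕ} (x : W m n) :
    x⁻¹ = ⟨fun i => -(x.a (x.p.symm i)), x.p⁻¹⟩ := rfl

/-- The wreath product group structure, with multiplication
`(a | σ)(b | τ) = (aᵢ + b_{σ(i)} | στ)` (where `στ` means: apply `σ` first). -/
instance (m n : ℕ) : Group (W m n) where
  mul_assoc x y z := by
    refine ext' (funext fun i => ?_) ?_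
    · show (x.a i + y.a (x.p i)) + z.a ((y.p * x.p) i)
        = x.a i + (y.a (x.p i) + z.a (y.p (x.p i)))
      simp [Equiv.Perm.mul_apply, add_assoc]
    · show (z.p * (y.p * x.p)) = (z.p * y.p) * x.p
      exact (mul_assoc _ _ _).symm
  one_mul x := by
    refine ext' (funext fun i => ?_) ?_
    · show 0 + x.a ((1 : Equiv.Perm (Fin _)) i) = x.a i; simp
    · show x.p * 1 = x.p; simp
  mul_one x := by
    refine ext' (funext fun i => ?_) ?_
    · show x.a i + 0 = x.a i; simp
    · show 1 * x.p = x.p; simp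
  inv_mul_cancel x := by
    refine ext' (funext fun i => ?_) ?_
    · simp [mul_def, inv_def, one_def, Equiv.Perm.inv_def]
    · simp [mul_def, inv_def, one_def, Equiv.Perm.inv_def]
      exact mul_inv_cancel x.p

end W

/-- The subgroup of `ZMod m ≀ Sₙ` of elements whose diagonal entries sum to `0 mod e`.
For `m = d*e` this is the imprimitive complex reflection group `G(de,e,n)`. -/
def Gsub (m e n : ℕ) (h : e ∣ m) : Subgroup (W m n) where
  carrier := {x | ZMod.castHom h (ZMod e) (∑ i, x.a i) = 0}
  one_mem' := by simp [W.one_def]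
  mul_mem' := by
    intro x y hx hy
    show ZMod.castHom h (ZMod e) (∑ i, (x.a i + y.a (x.p i))) = 0
    rw [Finset.sum_add_distrib, Equiv.sum_comp x.p y.a, map_add]
    rw [Set.mem_setOf_eq] at hx hy
    rw [hx, hy, add_zero]
  inv_mem' := by
    intro x hx
    show ZMod.castHom h (ZMod e) (∑ i, -(x.a (x.p.symm i))) = 0
    rw [Finset.sum_neg_distrib, Equiv.sum_comp x.p.symm x.a, map_neg]
    rw [Set.mem_setOf_eq] at hx
    rw [hx, neg_zero]

lemma mem_Gsub {m e n : ℕ} (h : e ∣ m) (x : W m n) :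
    x ∈ Gsub m e n h ↔ ZMod.castHom h (ZMod e) (∑ i, x.a i) = 0 := Iff.rfl

/-- The imprimitive complex reflection group `G(de,e,n)`. -/
abbrev Gde (d e n : ℕ) : Subgroup (W (d * e) n) := Gsub (d * e) e n (dvd_mul_left e d)

/-- A Hamiltonian cycle in the (undirected, right) Cayley graph `Γ(G,S)`,
encoded as the list of edge labels (from `S ∪ S⁻¹`) along the cycle starting at `1`:
the partial products visit every element of `G` exactly once and the
total product returns to `1`. -/
def IsHamCycle {G : Type*} [Group G] (S : Set G) (l : List G) : Prop :=
  (∀ x ∈ l, x ∈ S ∨ x⁻¹ ∈ S) ∧ l.prod = 1 ∧ l.length = Nat.card G ∧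
    ((List.range l.length).map fun k => (l.take k).prod).Nodup

/-!
Write the elements of `G(2e,e,2)` as `(a, b | σ)`. Then `rs = (1, -1 | id)`, so
`w_{2i} = (i, -i | id)` and `w_{2i+1} = (i, -i | (1 2))`, while `v = (e - 1, 1 | (1 2))` and
`v² = (e, e | id)`, so that `v⁴ = 1`. The coordinate sum `a + b` is a homomorphism to `Z_{2e}`
vanishing on every `w_i` and equal to `e` on `v`, so `v^m w_i = w_j` forces `m` to be even; for
`m = 2` the first coordinate `e + ⌊i/2⌋` of `v² w_i` lies outside the range `[0, e)` of first
coordinates of the `w_j`. Hence the `8e` products `v^m w_i` are distinct. As `a + b ∈ {0, e}` on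
`G(2e,e,2)`, the group has at most `8e` elements, so these products exhaust it. Finally the prefix
products of the edge sequence are exactly the `v^m w_i`, in lexicographic order of `(m, i)`.
-/

namespace List

variable {α : Type*}

theorem take_flatten_replicate (B : List α) {n q j : ℕ} (hq : q < n) (hj : j ≤ B.length) :
    (flatten (replicate n B)).take (q * B.length + j) = flatten (replicate q B) ++ B.take j := by
  obtain ⟨p, rfl⟩ := Nat.exists_eq_add_of_lt hq
  rw [show q + p + 1 = q + (p + 1) by omega, replicate_add, flatten_append, replicate_succ,
    flatten_cons]
  have hlen : (flatten (replicate q B)).length = q * B.length := by simp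
  rw [← hlen, take_length_add_append, take_append_of_le_length hj]

theorem prod_take_flatten_replicate {M : Type*} [Monoid M] (B : List M) {n k : ℕ}
    (hk : k < n * B.length) :
    ((flatten (replicate n B)).take k).prod =
      B.prod ^ (k / B.length) * (B.take (k % B.length)).prod := by
  have hB : 0 < B.length := Nat.pos_of_ne_zero (by rintro h; simp [h] at hk)
  have hq : k / B.length < n := (Nat.div_lt_iff_lt_mul hB).2 hk
  conv_lhs => rw [← Nat.div_add_mod' k B.length]
  rw [take_flatten_replicate B hq (Nat.mod_lt _ hB).le, prod_append, prod_flatten]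
  simp

theorem take_append_pair (L : List α) (a b c : α) {k : ℕ} (hk : k ≤ L.length + 1) :
    (L ++ [a, b]).take k = (L ++ [a, c]).take k := by
  have h : ∀ x : α, (L ++ [a, x]).take k = (L ++ [a]).take k := fun x => by
    rw [show L ++ [a, x] = L ++ [a] ++ [x] by simp, take_append_of_le_length (by simpa using hk)]
  rw [h, h]

end List

open List in
theorem isHamCycle_flatten_replicate {G : Type*} [Group G] {S : Set G} {B : List G} {n : ℕ}
    (hS : ∀ x ∈ B, x ∈ S) (hpow : B.prod ^ n = 1) (hcard : Nat.card G = n * B.length)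
    (hinj : Set.InjOn (fun p : ℕ × ℕ => B.prod ^ p.1 * (B.take p.2).prod)
      (Set.Iio n ×ˢ Set.Iio B.length)) :
    IsHamCycle S (flatten (replicate n B)) := by
  have hlen : (flatten (replicate n B)).length = n * B.length := by simp
  refine ⟨fun x hx => .inl (hS x ?_), by simp [prod_flatten, hpow], hlen.trans hcard.symm, ?_⟩
  · obtain ⟨l, hl, hx⟩ := mem_flatten.1 hx
    exact (eq_of_mem_replicate hl) ▸ hx
  rw [hlen]
  refine Nodup.map_on (fun k hk k' hk' heq => ?_) nodup_range
  rw [mem_range] at hk hk'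
  have hB : 0 < B.length := Nat.pos_of_ne_zero (by rintro h; simp [h] at hk)
  have hmem : ∀ k < n * B.length,
      (k / B.length, k % B.length) ∈ Set.Iio n ×ˢ Set.Iio B.length := fun k hk =>
    ⟨(Nat.div_lt_iff_lt_mul hB).2 hk, Nat.mod_lt _ hB⟩
  rw [prod_take_flatten_replicate B hk, prod_take_flatten_replicate B hk'] at heq
  have := hinj (hmem k hk) (hmem k' hk') heq
  simp only [Prod.mk.injEq] at this
  rw [← Nat.div_add_mod k B.length, ← Nat.div_add_mod k' B.length, this.1, this.2]

open List in
theorem prod_take_flatten_replicate_pair_append {M : Type*} [Monoid M] (a b c : M)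
    (w : ℕ → M) (hw₁ : ∀ i, w (2 * i) = (a * b) ^ i)
    (hw₂ : ∀ i, w (2 * i + 1) = (a * b) ^ i * a)
    {e k : ℕ} (hk : k < 2 * e) :
    ((flatten (replicate (e - 1) [a, b]) ++ [a, c]).take k).prod = w k := by
  have hL : (flatten (replicate (e - 1) [a, b])).length = 2 * (e - 1) := by simp [mul_comm]
  have hrep : flatten (replicate e [a, b]) = flatten (replicate (e - 1) [a, b]) ++ [a, b] := by
    rw [← flatten_concat, ← replicate_succ', Nat.sub_add_cancel (by omega)]
  rw [take_append_pair _ a c b (by omega), ← hrep,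
    prod_take_flatten_replicate _ (by simpa [mul_comm] using hk)]
  obtain ⟨i, rfl | rfl⟩ := Nat.even_or_odd' k
  · simp [hw₁, Nat.mul_mod_right]
  · simp [hw₂, Nat.mul_add_div]

theorem ZMod.eq_zero_or_eq_of_castHom_eq_zero {e : ℕ} [NeZero e] {z : ZMod (2 * e)}
    (hz : ZMod.castHom (dvd_mul_left e 2) (ZMod e) z = 0) : z = 0 ∨ z = e := by
  rw [← ZMod.natCast_zmod_val z] at hz ⊢
  rw [map_natCast, ZMod.natCast_eq_zero_iff] at hz
  obtain ⟨c, hc⟩ := hz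
  have hc2 : c < 2 := by
    by_contra! h
    have := ZMod.val_lt z
    nlinarith [NeZero.pos e]
  interval_cases c <;> simp [hc]

theorem ZMod.natCast_inj_of_lt {N a b : ℕ} (h : (a : ZMod N) = b) (ha : a < N) (hb : b < N) :
    a = b := by
  rwa [ZMod.natCast_eq_natCast_iff', Nat.mod_eq_of_lt ha, Nat.mod_eq_of_lt hb] at h

theorem Equiv.swap_pow_mod_two_inj {i j : ℕ}
    (h : Equiv.swap (0 : Fin 2) 1 ^ (i % 2) = Equiv.swap 0 1 ^ (j % 2)) : i % 2 = j % 2 := by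
  rcases Nat.mod_two_eq_zero_or_one i with hi | hi <;>
    rcases Nat.mod_two_eq_zero_or_one j with hj | hj <;> simp [hi, hj] at h ⊢
  exact absurd h.symm (by simp)

namespace W

variable {m n : ℕ}

@[simp] theorem mul_a (x y : W m n) (i : Fin n) : (x * y).a i = x.a i + y.a (x.p i) := rfl

instance [NeZero m] : Finite (W m n) :=
  Finite.of_injective (fun x : W m n => (x.a, x.p)) fun _ _ h =>
    ext' (congrArg Prod.fst h) (congrArg Prod.snd h)

def total (x : W m n) : ZMod m := ∑ i, x.a i

theorem total_mul (x y : W m n) : total (x * y) = total x + total y := by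
  simp only [total, mul_a, Finset.sum_add_distrib, Equiv.sum_comp x.p y.a]

theorem total_pow (x : W m n) (k : ℕ) : total (x ^ k) = k • total x := by
  induction k with
  | zero => simp [total, one_def]
  | succ k ih => rw [pow_succ, total_mul, ih, succ_nsmul]

theorem total_mk (a b : ZMod m) (σ : Equiv.Perm (Fin 2)) :
    total (⟨![a, b], σ⟩ : W m 2) = a + b := by
  simp [total, Fin.sum_univ_two]

theorem mk_one_mul (a b c d : ZMod m) (τ : Equiv.Perm (Fin 2)) :
    (⟨![a, b], 1⟩ : W m 2) * ⟨![c, d], τ⟩ = ⟨![a + c, b + d], τ⟩ := by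
  refine ext' (funext fun i => ?_) (mul_one τ)
  fin_cases i <;> rfl

theorem mk_swap_mul (a b c d : ZMod m) (τ : Equiv.Perm (Fin 2)) :
    (⟨![a, b], Equiv.swap 0 1⟩ : W m 2) * ⟨![c, d], τ⟩ =
      ⟨![a + d, b + c], τ * Equiv.swap 0 1⟩ := by
  refine ext' (funext fun i => ?_) rfl
  fin_cases i <;> rfl

theorem mk_one_pow (a b : ZMod m) (k : ℕ) :
    (⟨![a, b], 1⟩ : W m 2) ^ k = ⟨![k * a, k * b], 1⟩ := by
  induction k with
  | zero => exact ext' (funext fun i => by fin_cases i <;> simp [one_def]) rfl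
  | succ k ih => rw [pow_succ, ih, mk_one_mul]; push_cast; ring_nf

theorem mk_swap_sq (a b : ZMod m) :
    (⟨![a, b], Equiv.swap 0 1⟩ : W m 2) ^ 2 = ⟨![a + b, b + a], 1⟩ := by
  rw [sq, mk_swap_mul, Equiv.swap_mul_self]

end W

theorem card_Gde_two_two_le {e : ℕ} [NeZero e] : Nat.card (Gde 2 e 2) ≤ 8 * e := by
  let f : Gde 2 e 2 → ZMod (2 * e) × Equiv.Perm (Fin 2) × Bool := fun g =>
    let x : W (2 * e) 2 := g
    (x.a 0, x.p, decide (x.a 0 + x.a 1 = 0))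
  have hf : Function.Injective f := by
    rintro ⟨⟨x, σ⟩, hx⟩ ⟨⟨y, τ⟩, hy⟩ hxy
    simp only [f, Prod.mk.injEq, decide_eq_decide] at hxy
    obtain ⟨h0, rfl, hzero⟩ := hxy
    have hsum : x 0 + x 1 = y 0 + y 1 := by
      rw [mem_Gsub, Fin.sum_univ_two] at hx hy
      rcases ZMod.eq_zero_or_eq_of_castHom_eq_zero hx with h | h <;>
        rcases ZMod.eq_zero_or_eq_of_castHom_eq_zero hy with h' | h' <;> grind
    have h1 : x 1 = y 1 := by linear_combination hsum - h0
    exact Subtype.ext (W.ext' (funext (Fin.forall_fin_two.2 ⟨h0, h1⟩)) rfl)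
  calc Nat.card (Gde 2 e 2) ≤ Nat.card (ZMod (2 * e) × Equiv.Perm (Fin 2) × Bool) :=
        Nat.card_le_card_of_injective f hf
    _ = 8 * e := by simp [Nat.card_eq_fintype_card, Fintype.card_perm]; ring

section

variable {e : ℕ} {r s t v : Gde 2 e 2} {w : ℕ → Gde 2 e 2}

theorem coe_rs_pow (hr : (r : W (2 * e) 2) = ⟨![0, 0], Equiv.swap 0 1⟩)
    (hs : (s : W (2 * e) 2) = ⟨![-1, 1], Equiv.swap 0 1⟩) (i : ℕ) :
    (((r * s) ^ i : Gde 2 e 2) : W (2 * e) 2) = ⟨![i, -i], 1⟩ := by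
  rw [SubgroupClass.coe_pow, Subgroup.coe_mul, hr, hs, W.mk_swap_mul, Equiv.swap_mul_self,
    zero_add, zero_add, W.mk_one_pow, mul_one, mul_neg_one]

theorem coe_w (hr : (r : W (2 * e) 2) = ⟨![0, 0], Equiv.swap 0 1⟩)
    (hs : (s : W (2 * e) 2) = ⟨![-1, 1], Equiv.swap 0 1⟩)
    (hw₁ : ∀ i, w (2 * i) = (r * s) ^ i) (hw₂ : ∀ i, w (2 * i + 1) = (r * s) ^ i * r)
    (k : ℕ) :
    (w k : W (2 * e) 2) = ⟨![(k / 2 : ℕ), -(k / 2 : ℕ)], Equiv.swap 0 1 ^ (k % 2)⟩ := by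
  obtain ⟨i, rfl | rfl⟩ := Nat.even_or_odd' k
  · simp [hw₁, coe_rs_pow hr hs]
  · rw [hw₂, Subgroup.coe_mul, coe_rs_pow hr hs, hr, W.mk_one_mul]
    simp [Nat.mul_add_div]

theorem coe_v (he : 1 ≤ e) (hr : (r : W (2 * e) 2) = ⟨![0, 0], Equiv.swap 0 1⟩)
    (hs : (s : W (2 * e) 2) = ⟨![-1, 1], Equiv.swap 0 1⟩)
    (ht : (t : W (2 * e) 2) = ⟨![(e : ZMod (2 * e)), 0], 1⟩)
    (hv : v = (r * s) ^ (e - 1) * r * t) :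
    (v : W (2 * e) 2) = ⟨![e - 1, 1], Equiv.swap 0 1⟩ := by
  rw [hv, Subgroup.coe_mul, Subgroup.coe_mul, coe_rs_pow hr hs, hr, ht, W.mk_one_mul,
    W.mk_swap_mul, Nat.cast_sub he]
  congr 3 <;> simp

theorem w_injOn
    (hw : ∀ k, (w k : W (2 * e) 2) =
      ⟨![(k / 2 : ℕ), -(k / 2 : ℕ)], Equiv.swap 0 1 ^ (k % 2)⟩) :
    Set.InjOn w (Set.Iio (2 * e)) := by
  rintro i (hi : i < 2 * e) j (hj : j < 2 * e) h
  have h' := congrArg Subtype.val h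
  rw [hw, hw] at h'
  have hdiv := ZMod.natCast_inj_of_lt (congrFun (congrArg W.a h') 0) (by omega) (by omega)
  have hmod := Equiv.swap_pow_mod_two_inj (congrArg W.p h')
  omega

theorem coe_sq_of_coe_eq (hv : (v : W (2 * e) 2) = ⟨![e - 1, 1], Equiv.swap 0 1⟩) :
    ((v ^ 2 : Gde 2 e 2) : W (2 * e) 2) = ⟨![e, e], 1⟩ := by
  rw [SubgroupClass.coe_pow, hv, W.mk_swap_sq]
  congr 3 <;> ring

theorem pow_four_eq_one_of_coe_eq (hv : (v : W (2 * e) 2) = ⟨![e - 1, 1], Equiv.swap 0 1⟩) :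
    v ^ 4 = 1 := by
  have h2e : (2 * e : ZMod (2 * e)) = 0 := mod_cast ZMod.natCast_self (2 * e)
  refine Subtype.ext ?_
  rw [show 4 = 2 * 2 by rfl, pow_mul, SubgroupClass.coe_pow, coe_sq_of_coe_eq hv, W.mk_one_pow]
  refine W.ext' (funext fun i => ?_) rfl
  fin_cases i <;> simp [W.one_def, h2e]

theorem eq_zero_and_eq_of_pow_mul_eq [NeZero e]
    (hv : (v : W (2 * e) 2) = ⟨![e - 1, 1], Equiv.swap 0 1⟩)
    (hw : ∀ k, (w k : W (2 * e) 2) =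
      ⟨![(k / 2 : ℕ), -(k / 2 : ℕ)], Equiv.swap 0 1 ^ (k % 2)⟩)
    {m i j : ℕ} (hm : m < 4) (hi : i < 2 * e) (hj : j < 2 * e) (h : v ^ m * w i = w j) :
    m = 0 ∧ i = j := by
  have htotal :
      W.total ((v ^ m * w i : Gde 2 e 2) : W (2 * e) 2) = ((m * e : ℕ) : ZMod (2 * e)) := by
    rw [Subgroup.coe_mul, SubgroupClass.coe_pow, W.total_mul, W.total_pow, hv, hw, W.total_mk,
      W.total_mk]
    push_cast; ring
  have hm2 : 2 ∣ m := by
    rw [h, hw, W.total_mk, add_neg_cancel, eq_comm, ZMod.natCast_eq_zero_iff] at htotal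
    exact Nat.dvd_of_mul_dvd_mul_right (NeZero.pos e) (by simpa [mul_comm] using htotal)
  obtain rfl | rfl : m = 0 ∨ m = 2 := by omega
  · exact ⟨rfl, w_injOn hw hi hj (by simpa using h)⟩
  · have h0 := congrFun (congrArg (fun x : Gde 2 e 2 => (x : W (2 * e) 2).a) h) 0
    simp only [Subgroup.coe_mul, coe_sq_of_coe_eq hv, hw, W.mul_a] at h0
    have := ZMod.natCast_inj_of_lt (a := e + i / 2) (b := j / 2) (by push_cast; exact h0)
      (by omega) (by omega)
    omega

theorem pow_mul_injOn [NeZero e]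
    (hv : (v : W (2 * e) 2) = ⟨![e - 1, 1], Equiv.swap 0 1⟩)
    (hw : ∀ k, (w k : W (2 * e) 2) =
      ⟨![(k / 2 : ℕ), -(k / 2 : ℕ)], Equiv.swap 0 1 ^ (k % 2)⟩) :
    Set.InjOn (fun p : ℕ × ℕ => v ^ p.1 * w p.2) (Set.Iio 4 ×ˢ Set.Iio (2 * e)) := by
  rintro ⟨m, i⟩ ⟨hm : m < 4, hi : i < 2 * e⟩ ⟨m', j⟩ ⟨hm' : m' < 4, hj : j < 2 * e⟩
    (h : v ^ m * w i = v ^ m' * w j)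
  wlog hle : m' ≤ m generalizing m i m' j
  · exact (this m' j hm' hj m i hm hi h.symm (by omega)).symm
  have hcancel : v ^ (m - m') * w i = w j := by
    rw [← mul_right_inj (v ^ m'), ← mul_assoc, ← pow_add, Nat.add_sub_cancel' hle, h]
  obtain ⟨hmm, rfl⟩ := eq_zero_and_eq_of_pow_mul_eq hv hw (by omega) hi hj hcancel
  ext <;> simp only; omega

theorem bijective_pow_mul [NeZero e]
    (hv : (v : W (2 * e) 2) = ⟨![e - 1, 1], Equiv.swap 0 1⟩)
    (hw : ∀ k, (w k : W (2 * e) 2) =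
      ⟨![(k / 2 : ℕ), -(k / 2 : ℕ)], Equiv.swap 0 1 ^ (k % 2)⟩) :
    Function.Bijective fun q : Fin 4 × Fin (2 * e) => v ^ (q.1 : ℕ) * w q.2 := by
  refine Function.Injective.bijective_of_nat_card_le (fun p q hpq => ?_) ?_
  · have hmem (q : Fin 4 × Fin (2 * e)) :
        ((q.1 : ℕ), (q.2 : ℕ)) ∈ Set.Iio 4 ×ˢ Set.Iio (2 * e) := ⟨q.1.2, q.2.2⟩
    have := pow_mul_injOn hv hw (hmem p) (hmem q) hpq
    simp only [Prod.mk.injEq] at this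
    exact Prod.ext (Fin.ext this.1) (Fin.ext this.2)
  · have := card_Gde_two_two_le (e := e)
    simp only [Nat.card_eq_fintype_card, Fintype.card_prod, Fintype.card_fin]
    omega

end

/-- Lemma 4.2. In `G(2e,e,2)` with `e ≥ 3`, with
`r = (0,0 | (1 2))`, `s = (-1,1 | (1 2))`, `t = (e,0 | id)`, `v = (rs)^(e-1) r t`,
`w_(2i) = (rs)ⁱ` and `w_(2i+1) = (rs)ⁱ r`: if `0 ≤ m < 4`, `0 ≤ i,j < 2e` and
`v^m wᵢ = w_j` then `m = 0 ∧ i = j`; hence the `8e` elements `v^m wᵢ` are pairwise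
distinct and exhaust `G(2e,e,2)`, so the edge sequence `[[r,s]^(e-1), r, t]` repeated
`4` times yields a Hamiltonian cycle in `Γ(G(2e,e,2), {r,s,t})`. -/
theorem stmt4 (e : ℕ) (he : 3 ≤ e)
    (r s t : Gde 2 e 2)
    (hr : (r : W (2 * e) 2) = ⟨![0, 0], Equiv.swap 0 1⟩)
    (hs : (s : W (2 * e) 2) = ⟨![-1, 1], Equiv.swap 0 1⟩)
    (ht : (t : W (2 * e) 2) = ⟨![(e : ZMod (2 * e)), 0], 1⟩)
    (v : Gde 2 e 2) (hv : v = (r * s) ^ (e - 1) * r * t)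
    (w : ℕ → Gde 2 e 2)
    (hw1 : ∀ i, w (2 * i) = (r * s) ^ i)
    (hw2 : ∀ i, w (2 * i + 1) = (r * s) ^ i * r) :
    (∀ m < 4, ∀ i < 2 * e, ∀ j < 2 * e, v ^ m * w i = w j → m = 0 ∧ i = j) ∧
    (∀ g : Gde 2 e 2, ∃! p : ℕ × ℕ, p.1 < 4 ∧ p.2 < 2 * e ∧ g = v ^ p.1 * w p.2) ∧
    IsHamCycle {r, s, t} (List.flatten (List.replicate 4
      (List.flatten (List.replicate (e - 1) [r, s]) ++ [r, t]))) := by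
  have : NeZero e := ⟨by omega⟩
  have hvc := coe_v (by omega) hr hs ht hv
  have hwc := coe_w hr hs hw1 hw2
  have hinj := pow_mul_injOn hvc hwc
  have hbij := bijective_pow_mul hvc hwc
  refine ⟨fun m hm i hi j hj => eq_zero_and_eq_of_pow_mul_eq hvc hwc hm hi hj, fun g => ?_, ?_⟩
  · obtain ⟨⟨m, i⟩, hmi⟩ := hbij.2 g
    exact ⟨(m, i), ⟨m.2, i.2, hmi.symm⟩,
      fun p hp => hinj ⟨hp.1, hp.2.1⟩ ⟨m.2, i.2⟩ (hp.2.2.symm.trans hmi.symm)⟩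
  set B := List.flatten (List.replicate (e - 1) [r, s]) ++ [r, t]
  have hlen : B.length = 2 * e := by simp [B]; omega
  have hprod : B.prod = v := by simp [B, List.prod_flatten, hv, mul_assoc]
  have htake : ∀ k < 2 * e, (B.take k).prod = w k :=
    fun k hk => prod_take_flatten_replicate_pair_append r s t w hw1 hw2 hk
  refine isHamCycle_flatten_replicate (fun x hx => ?_)
    (hprod ▸ pow_four_eq_one_of_coe_eq hvc) ?_ ?_
  · simp only [B, List.mem_append, List.mem_flatten, List.mem_replicate] at hx
    aesop
  · rw [hlen, ← Nat.card_eq_of_bijective _ hbij]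
    simp [Nat.card_eq_fintype_card]
  · rw [hlen, hprod]
    exact hinj.congr fun p hp => by simp only [htake p.2 hp.2]
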